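/- arXiv:1910.06202 — 2 statements merged into one kernel-verified Lean document; each statement's English description precedes it below -/
import Mathlib

section
/- In Lewis' system Vb = ⟨PC, ID, MOD', PIE; RCK, RE⟩, the axiom CV is derivable: ⊢ (φ>χ) ∧ ¬(φ>¬ψ) → (φ∧ψ > χ). -/
inductive Form where
  | var : Nat → Form
  | bot : Form
  | neg : Form → Form
  | conj : Form → Form → Form
  | disj : Form → Form → Form
  | imp : Form → Form → Form
  | cond : Form → Form → Form

def Form.iff (p q : Form) : Form := Form.conj (Form.imp p q) (Form.imp q p)

/-- A boolean valuation respecting the classical connectives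
(conditional subformulas are treated as atoms). -/
def ClassVal (v : Form → Bool) : Prop :=
  v Form.bot = false ∧
  (∀ p, v (Form.neg p) = ! v p) ∧
  (∀ p q, v (Form.conj p q) = (v p && v q)) ∧
  (∀ p q, v (Form.disj p q) = (v p || v q)) ∧
  (∀ p q, v (Form.imp p q) = (! v p || v q))

/-- Classical tautologies. -/
def IsTaut (p : Form) : Prop := ∀ v, ClassVal v → v p = true

def conjList (l : List Form) : Form := l.foldr Form.conj (Form.neg Form.bot)

/-- Lewis' system Vb = ⟨PC, ID, MOD', PIE; RCK, RE⟩, with RE given via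
RCEA and RCEC, which suffice for replacement of equivalents. -/
inductive Der : Form → Prop where
  | taut : ∀ p, IsTaut p → Der p
  | mp : ∀ p q, Der (Form.imp p q) → Der p → Der q
  | id : ∀ p, Der (Form.cond p p)
  | mod' : ∀ p q, Der (Form.imp (Form.cond (Form.neg p) p) (Form.cond q p))
  | pie : ∀ p q r, Der (Form.disj (Form.cond p (Form.neg q))
      (Form.iff (Form.cond (Form.conj p q) r) (Form.cond p (Form.imp q r))))
  | rck : ∀ (l : List Form) (p q : Form), Der (Form.imp (conjList l) q) →
      Der (Form.imp (conjList (l.map (Form.cond p))) (Form.cond p q))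
  | rcea : ∀ p q r, Der (Form.iff p q) → Der (Form.iff (Form.cond p r) (Form.cond q r))
  | rcec : ∀ p q r, Der (Form.iff p q) → Der (Form.iff (Form.cond r p) (Form.cond r q))

/-- CV is derivable in Vb. -/
theorem cv_derivable (p q r : Form) :
    Der (Form.imp
      (Form.conj (Form.cond p r) (Form.neg (Form.cond p (Form.neg q))))
      (Form.cond (Form.conj p q) r)) := by
  -- abbreviations
  have hstep : Der (Form.imp (conjList [r]) (Form.imp q r)) := by
    apply Der.taut
    intro v hv
    obtain ⟨hb, hn, hc, hd, hi⟩ := hv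
    simp only [conjList, List.foldr, hi, hc, hn, hd, hb]
    cases v r <;> cases v q <;> rfl
  have hrck : Der (Form.imp (conjList ([r].map (Form.cond p)))
      (Form.cond p (Form.imp q r))) := Der.rck [r] p (Form.imp q r) hstep
  have hpie := Der.pie p q r
  have hbig : Der (Form.imp
      (Form.disj (Form.cond p (Form.neg q))
        (Form.iff (Form.cond (Form.conj p q) r) (Form.cond p (Form.imp q r))))
      (Form.imp
        (Form.imp (conjList ([r].map (Form.cond p))) (Form.cond p (Form.imp q r)))
        (Form.imp
          (Form.conj (Form.cond p r) (Form.neg (Form.cond p (Form.neg q))))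
          (Form.cond (Form.conj p q) r)))) := by
    apply Der.taut
    intro v hv
    obtain ⟨hb, hn, hc, hd, hi⟩ := hv
    simp only [conjList, List.map, List.foldr, Form.iff, hi, hc, hn, hd, hb]
    cases v (Form.cond p (Form.neg q)) <;>
      cases v (Form.cond (Form.conj p q) r) <;>
      cases v (Form.cond p (Form.imp q r)) <;>
      cases v (Form.cond p r) <;> rfl
  exact Der.mp _ _ (Der.mp _ _ hbig hpie) hrck
end

section
/- In Lewis' system Vb = ⟨PC, ID, MOD', PIE; RCK, RE⟩, the axiom CSO is derivable: ⊢ (φ>ψ)∧(ψ>φ) → ((φ>χ) ↔ (ψ>χ)). -/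
local infixr:60 " ➝ " => Form.imp
local infixr:65 " ⋏ " => Form.conj
local infixr:64 " ⋎ " => Form.disj
local prefix:70 "∼" => Form.neg

private lemma dmp {x y : Form} (h1 : Der (x ➝ y)) (h2 : Der x) : Der y :=
  Der.mp x y h1 h2

private lemma taut_contra (x y : Form) : IsTaut ((x ⋏ (∼x ⋏ ∼Form.bot)) ➝ y) := by
  intro v ⟨hb, hn, hc, hd, hi⟩
  simp only [Form.iff, hb, hn, hc, hd, hi]
  cases v x <;> cases v y <;> rfl

private lemma taut_exfalso (x : Form) : IsTaut ((Form.bot ⋏ ∼Form.bot) ➝ x) := by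
  intro v ⟨hb, hn, hc, hd, hi⟩
  simp only [Form.iff, hb, hn, hc, hd, hi]
  cases v x <;> rfl

private lemma taut_weak (x y : Form) : IsTaut ((x ⋏ ∼Form.bot) ➝ (y ➝ x)) := by
  intro v ⟨hb, hn, hc, hd, hi⟩
  simp only [Form.iff, hb, hn, hc, hd, hi]
  cases v x <;> cases v y <;> rfl

private lemma taut_mp2 (x y : Form) : IsTaut ((x ⋏ ((x ➝ y) ⋏ ∼Form.bot)) ➝ y) := by
  intro v ⟨hb, hn, hc, hd, hi⟩
  simp only [Form.iff, hb, hn, hc, hd, hi]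
  cases v x <;> cases v y <;> rfl

private lemma taut_dne (x : Form) : IsTaut (Form.iff x (∼∼x)) := by
  intro v ⟨hb, hn, hc, hd, hi⟩
  simp only [Form.iff, hb, hn, hc, hd, hi]
  cases v x <;> rfl

private lemma taut_comm (x y : Form) : IsTaut (Form.iff (x ⋏ y) (y ⋏ x)) := by
  intro v ⟨hb, hn, hc, hd, hi⟩
  simp only [Form.iff, hb, hn, hc, hd, hi]
  cases v x <;> cases v y <;> rfl

private lemma glueE (A F K M M2 E : Form) : IsTaut (
    ((A ⋏ (F ⋏ ∼Form.bot)) ➝ K) ➝ ((K ⋏ ∼Form.bot) ➝ M) ➝ (Form.iff M M2) ➝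
    (M2 ➝ E) ➝ ((A ⋏ F) ➝ E)) := by
  intro v ⟨hb, hn, hc, hd, hi⟩
  simp only [Form.iff, hb, hn, hc, hd, hi]
  cases v A <;> cases v F <;> cases v K <;> cases v M <;> cases v M2 <;> cases v E <;> rfl

private lemma glueD1 (A B C D E F G H I J : Form) : IsTaut (
    (E ⋎ Form.iff G I) ➝ ((B ⋏ (E ⋏ ∼Form.bot)) ➝ D) ➝ (F ⋎ Form.iff H J) ➝
    ((A ⋏ F) ➝ E) ➝ ((C ⋏ ∼Form.bot) ➝ J) ➝ (Form.iff H G) ➝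
    ((B ⋏ (I ⋏ ∼Form.bot)) ➝ D) ➝ ((A ⋏ B) ➝ (C ➝ D))) := by
  intro v ⟨hb, hn, hc, hd, hi⟩
  simp only [Form.iff, hb, hn, hc, hd, hi]
  cases v A <;> cases v B <;> cases v C <;> cases v D <;> cases v E <;> cases v F <;>
    cases v G <;> cases v H <;> cases v I <;> cases v J <;> rfl

private lemma glueD2 (A B C D E F G H I J : Form) : IsTaut (
    (E ⋎ Form.iff G I) ➝ (F ⋎ Form.iff H J) ➝ ((B ⋏ E) ➝ F) ➝
    ((A ⋏ (F ⋏ ∼Form.bot)) ➝ C) ➝ ((D ⋏ ∼Form.bot) ➝ I) ➝ (Form.iff H G) ➝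
    ((A ⋏ (J ⋏ ∼Form.bot)) ➝ C) ➝ ((A ⋏ B) ➝ (D ➝ C))) := by
  intro v ⟨hb, hn, hc, hd, hi⟩
  simp only [Form.iff, hb, hn, hc, hd, hi]
  cases v A <;> cases v B <;> cases v C <;> cases v D <;> cases v E <;> cases v F <;>
    cases v G <;> cases v H <;> cases v I <;> cases v J <;> rfl

private lemma glueFin (X Y Z : Form) : IsTaut (
    (X ➝ (Y ➝ Z)) ➝ (X ➝ (Z ➝ Y)) ➝ (X ➝ ((Y ➝ Z) ⋏ (Z ➝ Y)))) := by
  intro v ⟨hb, hn, hc, hd, hi⟩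
  simp only [Form.iff, hb, hn, hc, hd, hi]
  cases v X <;> cases v Y <;> cases v Z <;> rfl

/-- CSO is derivable in Vb. -/
theorem cso_derivable (p q r : Form) :
    Der (Form.imp (Form.conj (Form.cond p q) (Form.cond q p))
      (Form.iff (Form.cond p r) (Form.cond q r))) := by
  -- atoms
  set a := Form.cond p q with ha
  set b := Form.cond q p with hb'
  set c := Form.cond p r with hc'
  set d := Form.cond q r with hd'
  -- the two PIE instances
  have A1 : Der (Form.cond q (∼p) ⋎
      Form.iff (Form.cond (q ⋏ p) r) (Form.cond q (p ➝ r))) := Der.pie q p r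
  have A2 : Der (Form.cond p (∼q) ⋎
      Form.iff (Form.cond (p ⋏ q) r) (Form.cond p (q ➝ r))) := Der.pie p q r
  -- RCK instances
  have A3 : Der ((b ⋏ (Form.cond q (∼p) ⋏ ∼Form.bot)) ➝ d) :=
    Der.rck [p, ∼p] q r (Der.taut _ (taut_contra p r))
  have A4 : Der ((a ⋏ (Form.cond p (∼q) ⋏ ∼Form.bot)) ➝ Form.cond p Form.bot) :=
    Der.rck [q, ∼q] p Form.bot (Der.taut _ (taut_contra q Form.bot))
  have A5 : Der ((Form.cond p Form.bot ⋏ ∼Form.bot) ➝ Form.cond p (∼p)) :=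
    Der.rck [Form.bot] p (∼p) (Der.taut _ (taut_exfalso (∼p)))
  have A6 : Der (Form.iff (Form.cond p (∼p)) (Form.cond (∼∼p) (∼p))) :=
    Der.rcea p (∼∼p) (∼p) (Der.taut _ (taut_dne p))
  have A7 : Der (Form.cond (∼∼p) (∼p) ➝ Form.cond q (∼p)) := Der.mod' (∼p) q
  have E1 : Der ((a ⋏ Form.cond p (∼q)) ➝ Form.cond q (∼p)) :=
    dmp (dmp (dmp (dmp (Der.taut _ (glueE a (Form.cond p (∼q)) (Form.cond p Form.bot)
      (Form.cond p (∼p)) (Form.cond (∼∼p) (∼p)) (Form.cond q (∼p)))) A4) A5) A6) A7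
  have A8 : Der ((c ⋏ ∼Form.bot) ➝ Form.cond p (q ➝ r)) :=
    Der.rck [r] p (q ➝ r) (Der.taut _ (taut_weak r q))
  have A9 : Der (Form.iff (Form.cond (p ⋏ q) r) (Form.cond (q ⋏ p) r)) :=
    Der.rcea (p ⋏ q) (q ⋏ p) r (Der.taut _ (taut_comm p q))
  have A10 : Der ((b ⋏ (Form.cond q (p ➝ r) ⋏ ∼Form.bot)) ➝ d) :=
    Der.rck [p, p ➝ r] q r (Der.taut _ (taut_mp2 p r))
  have B3 : Der ((a ⋏ (Form.cond p (∼q) ⋏ ∼Form.bot)) ➝ c) :=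
    Der.rck [q, ∼q] p r (Der.taut _ (taut_contra q r))
  have B4 : Der ((b ⋏ (Form.cond q (∼p) ⋏ ∼Form.bot)) ➝ Form.cond q Form.bot) :=
    Der.rck [p, ∼p] q Form.bot (Der.taut _ (taut_contra p Form.bot))
  have B5 : Der ((Form.cond q Form.bot ⋏ ∼Form.bot) ➝ Form.cond q (∼q)) :=
    Der.rck [Form.bot] q (∼q) (Der.taut _ (taut_exfalso (∼q)))
  have B6 : Der (Form.iff (Form.cond q (∼q)) (Form.cond (∼∼q) (∼q))) :=
    Der.rcea q (∼∼q) (∼q) (Der.taut _ (taut_dne q))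
  have B7 : Der (Form.cond (∼∼q) (∼q) ➝ Form.cond p (∼q)) := Der.mod' (∼q) p
  have E2 : Der ((b ⋏ Form.cond q (∼p)) ➝ Form.cond p (∼q)) :=
    dmp (dmp (dmp (dmp (Der.taut _ (glueE b (Form.cond q (∼p)) (Form.cond q Form.bot)
      (Form.cond q (∼q)) (Form.cond (∼∼q) (∼q)) (Form.cond p (∼q)))) B4) B5) B6) B7
  have B8 : Der ((d ⋏ ∼Form.bot) ➝ Form.cond q (p ➝ r)) :=
    Der.rck [r] q (p ➝ r) (Der.taut _ (taut_weak r p))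
  have B10 : Der ((a ⋏ (Form.cond p (q ➝ r) ⋏ ∼Form.bot)) ➝ c) :=
    Der.rck [q, q ➝ r] p r (Der.taut _ (taut_mp2 q r))
  -- the two directions
  have dir1 : Der ((a ⋏ b) ➝ (c ➝ d)) :=
    dmp (dmp (dmp (dmp (dmp (dmp (dmp (Der.taut _ (glueD1 a b c d
      (Form.cond q (∼p)) (Form.cond p (∼q)) (Form.cond (q ⋏ p) r) (Form.cond (p ⋏ q) r)
      (Form.cond q (p ➝ r)) (Form.cond p (q ➝ r)))) A1) A3) A2) E1) A8) A9) A10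
  have dir2 : Der ((a ⋏ b) ➝ (d ➝ c)) :=
    dmp (dmp (dmp (dmp (dmp (dmp (dmp (Der.taut _ (glueD2 a b c d
      (Form.cond q (∼p)) (Form.cond p (∼q)) (Form.cond (q ⋏ p) r) (Form.cond (p ⋏ q) r)
      (Form.cond q (p ➝ r)) (Form.cond p (q ➝ r)))) A1) A2) E2) B3) B8) A9) B10
  exact dmp (dmp (Der.taut _ (glueFin (a ⋏ b) c d)) dir1) dir2
end
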